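/- Let k be a positive integer and let A be the adjacency matrix of a regular tournament of order 2k+1 with valency k. Then the block matrix C = [[A, A], [Aᵀ, Aᵀ]] (i.e., Matrix.fromBlocks A A Aᵀ Aᵀ) is the adjacency matrix of a directed strongly regular graph with parameters (4k+2, 2k, k, k−1, k); that is, C·C = k·I + (k−1)·C + k·(J − I − C) and C·J = J·C = 2k·J. -/

import Mathlib

/-!
For `C = [[X, X], [Y, Y]]` every block of `C * C` has the form `Z * (X + Y)`. When `X + Y = J - I`
and `X`, `Y` have constant row sums `c`, this is `c J - Z`, so `C² = c J - C`, which is exactly the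
DSRG equation with `t = μ = c`, `λ = c - 1`. A regular tournament `A` and its transpose `Aᵀ` meet
these conditions with `c = k`.
-/

open Matrix Kronecker

/-- The all-ones square matrix over `ℤ` indexed by `α`. -/
def allOnes (α : Type*) : Matrix α α ℤ := Matrix.of fun _ _ => 1

/-- `B` is the adjacency matrix of a directed strongly regular graph
with parameters `(n, k, t, l, m)`. -/
def IsAdjDSRG {α : Type*} [Fintype α] [DecidableEq α]
    (B : Matrix α α ℤ) (n k t l m : ℤ) : Prop :=
  (Fintype.card α : ℤ) = n ∧
  (∀ i j, B i j = 0 ∨ B i j = 1) ∧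
  (∀ i, B i i = 0) ∧
  B * B = t • (1 : Matrix α α ℤ) + l • B + m • (allOnes α - 1 - B) ∧
  B * allOnes α = k • allOnes α ∧
  allOnes α * B = k • allOnes α

/-- `A` is the adjacency matrix of a regular tournament of order `n` with valency `k`. -/
def IsRegularTournament {n : ℕ} (k : ℕ) (A : Matrix (Fin n) (Fin n) ℤ) : Prop :=
  (∀ i j, A i j = 0 ∨ A i j = 1) ∧
  (∀ i, A i i = 0) ∧
  A + Aᵀ = allOnes (Fin n) - 1 ∧
  A * allOnes (Fin n) = (k : ℤ) • allOnes (Fin n) ∧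
  allOnes (Fin n) * A = (k : ℤ) • allOnes (Fin n)

/-- The block matrix `M(X) = [[X, Xᵀ + I], [X + I, Xᵀ]]`. -/
def MBlock {α : Type*} [DecidableEq α] (X : Matrix α α ℤ) :
    Matrix (α ⊕ α) (α ⊕ α) ℤ :=
  Matrix.fromBlocks X (Xᵀ + 1) (X + 1) Xᵀ

section AllOnes

variable {α : Type*}

@[simp]
theorem allOnes_transpose : (allOnes α)ᵀ = allOnes α := rfl

theorem allOnes_sum :
    allOnes (α ⊕ α) = fromBlocks (allOnes α) (allOnes α) (allOnes α) (allOnes α) := by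
  ext (i | i) (j | j) <;> rfl

theorem smul_allOnes_sum_sub_fromBlocks (c : ℤ) (X Y : Matrix α α ℤ) :
    c • allOnes (α ⊕ α) - fromBlocks X X Y Y =
      fromBlocks (c • allOnes α - X) (c • allOnes α - X)
        (c • allOnes α - Y) (c • allOnes α - Y) := by
  simp only [allOnes_sum, fromBlocks_smul, sub_eq_add_neg, fromBlocks_neg, fromBlocks_add]

end AllOnes

section DoubledBlocks

variable {α : Type*} [Fintype α] {X Y : Matrix α α ℤ} {c : ℤ}

theorem fromBlocks_mul_self_of_add_eq [DecidableEq α] (hXY : X + Y = allOnes α - 1)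
    (hX : X * allOnes α = c • allOnes α) (hY : Y * allOnes α = c • allOnes α) :
    fromBlocks X X Y Y * fromBlocks X X Y Y = c • allOnes (α ⊕ α) - fromBlocks X X Y Y := by
  rw [fromBlocks_multiply, ← mul_add, ← mul_add, hXY, mul_sub, mul_sub, mul_one, mul_one, hX, hY,
    smul_allOnes_sum_sub_fromBlocks]

theorem fromBlocks_mul_allOnes (hX : X * allOnes α = c • allOnes α)
    (hY : Y * allOnes α = c • allOnes α) :
    fromBlocks X X Y Y * allOnes (α ⊕ α) = (2 * c) • allOnes (α ⊕ α) := by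
  rw [allOnes_sum, fromBlocks_multiply, hX, hY, fromBlocks_smul, ← two_smul ℤ, smul_smul]

theorem allOnes_mul_fromBlocks (hX : allOnes α * X = c • allOnes α)
    (hY : allOnes α * Y = c • allOnes α) :
    allOnes (α ⊕ α) * fromBlocks X X Y Y = (2 * c) • allOnes (α ⊕ α) := by
  rw [allOnes_sum, fromBlocks_multiply, hX, hY, fromBlocks_smul, ← two_smul ℤ, smul_smul]

end DoubledBlocks

namespace IsRegularTournament

variable {n k : ℕ} {A : Matrix (Fin n) (Fin n) ℤ}

theorem transpose_mul_allOnes (hA : IsRegularTournament k A) :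
    Aᵀ * allOnes (Fin n) = (k : ℤ) • allOnes (Fin n) := by
  simpa only [transpose_mul, transpose_smul, allOnes_transpose] using
    congrArg transpose hA.2.2.2.2

theorem allOnes_mul_transpose (hA : IsRegularTournament k A) :
    allOnes (Fin n) * Aᵀ = (k : ℤ) • allOnes (Fin n) := by
  simpa only [transpose_mul, transpose_smul, allOnes_transpose] using
    congrArg transpose hA.2.2.2.1

end IsRegularTournament

theorem stmt1_general (k : ℕ)
    (A : Matrix (Fin (2 * k + 1)) (Fin (2 * k + 1)) ℤ)
    (hA : IsRegularTournament k A) :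
    IsAdjDSRG (Matrix.fromBlocks A A Aᵀ Aᵀ)
      (4 * (k : ℤ) + 2) (2 * (k : ℤ)) (k : ℤ) ((k : ℤ) - 1) (k : ℤ) := by
  have hAtJ := hA.transpose_mul_allOnes
  have hJAt := hA.allOnes_mul_transpose
  obtain ⟨h01, hdiag, hsum, hAJ, hJA⟩ := hA
  refine ⟨?_, ?_, ?_, ?_, fromBlocks_mul_allOnes hAJ hAtJ, allOnes_mul_fromBlocks hJA hJAt⟩
  · simp only [Fintype.card_sum, Fintype.card_fin]
    push_cast
    ring
  · rintro (i | i) (j | j)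
    exacts [h01 i j, h01 i j, h01 j i, h01 j i]
  · rintro (i | i)
    exacts [hdiag i, hdiag i]
  · rw [fromBlocks_mul_self_of_add_eq hsum hAJ hAtJ]
    module

/-- Lemma 2(2): the block matrix `[[A, A], [Aᵀ, Aᵀ]]` built from a regular
tournament of order `2k+1` is the adjacency matrix of a
DSRG `(4k+2, 2k, k, k-1, k)`. -/
theorem stmt1 (k : ℕ) (hk : 0 < k)
    (A : Matrix (Fin (2 * k + 1)) (Fin (2 * k + 1)) ℤ)
    (hA : IsRegularTournament k A) :
    IsAdjDSRG (Matrix.fromBlocks A A Aᵀ Aᵀ)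
      (4 * (k : ℤ) + 2) (2 * (k : ℤ)) (k : ℤ) ((k : ℤ) - 1) (k : ℤ) :=
  stmt1_general k A hA
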